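/- For every y > 0, the boundary values lim_{δ→0⁺} P^∞(−iy + δ) and lim_{δ→0⁺} P^∞(−iy − δ) exist and satisfy the jump relation lim_{δ→0⁺} P^∞(−iy + δ) = ( lim_{δ→0⁺} P^∞(−iy − δ) ) · diag(e^{2πiβ}, e^{−2πiβ}); that is, P^∞ has the constant jump e^{2πiβσ₃} across the negative imaginary axis. -/

import Mathlib

open Complex Filter Set Topology Matrix

/-- Principal branch of √(z²−1), holomorphic on ℂ∖[−1,1]. -/
noncomputable def rr (z : ℂ) : ℂ :=
  Complex.exp ((1 / 2 : ℂ) * Complex.log (z - 1)) *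
    Complex.exp ((1 / 2 : ℂ) * Complex.log (z + 1))

/-- D(z) = z/(1 + i√(z²−1)). -/
noncomputable def DD (z : ℂ) : ℂ := z / (1 + Complex.I * rr z)

/-- u^{σ₃} = diag(u, u⁻¹). -/
noncomputable def dS (u : ℂ) : Matrix (Fin 2) (Fin 2) ℂ := !![u, 0; 0, u⁻¹]

/-- Logarithm with branch cut along the negative imaginary axis:
ℒ(w) = Log(−i·w) + iπ/2, with argument in (−π/2, 3π/2]. -/
noncomputable def Lneg (w : ℂ) : ℂ :=
  Complex.log (-Complex.I * w) + Complex.I * (Real.pi : ℂ) / 2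

/-- The global parametrix P^∞(z). -/
noncomputable def Pinf (α μ : ℝ) (β : ℂ) (z : ℂ) : Matrix (Fin 2) (Fin 2) ℂ :=
  dS (Complex.exp (β * (Real.log 2 : ℂ))) *
  dS (Complex.exp (((Real.pi : ℂ) * Complex.I / 2) * ((μ : ℂ) - β))) *
  (((1 : ℂ) / (Real.sqrt 2 : ℂ)) • !![(1 : ℂ), -Complex.I; -Complex.I, 1]) *
  dS (Complex.exp ((1 / 4 : ℂ) * (Complex.log (z - 1) - Complex.log (z + 1)))) *
  (((1 : ℂ) / (Real.sqrt 2 : ℂ)) • !![(1 : ℂ), Complex.I; Complex.I, 1]) *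
  dS (Complex.exp (-β * Lneg (z + rr z))) *
  dS (Complex.exp (((Real.pi : ℂ) * Complex.I / 2) * β)) *
  dS (Complex.exp ((α : ℂ) * Complex.log ((-Complex.I + rr z) / z))) *
  dS (Complex.exp ((μ : ℂ) * Complex.log (DD z)))

lemma dS_mul (a b : ℂ) : dS a * dS b = dS (a * b) := by
  simp [dS, Matrix.mul_fin_two, mul_inv, mul_comm]

lemma dS_decomp (u : ℂ) :
    dS u = u • !![(1:ℂ),0;0,0] + u⁻¹ • !![(0:ℂ),0;0,1] := by
  ext i j
  fin_cases i <;> fin_cases j <;> simp [dS]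

lemma tendsto_dS {ι : Type*} {f : ι → ℂ} {l : Filter ι} {c : ℂ} (h : Tendsto f l (𝓝 c))
    (hc : c ≠ 0) : Tendsto (fun x => dS (f x)) l (𝓝 (dS c)) := by
  simp only [dS_decomp]
  exact (h.smul_const _).add ((h.inv₀ hc).smul_const _)

lemma ne_one_of_im {z : ℂ} (hz : z.im ≠ 0) : z ≠ 1 := by
  intro h; apply hz; rw [h]; simp

lemma ne_neg_one_of_im {z : ℂ} (hz : z.im ≠ 0) : z ≠ -1 := by
  intro h; apply hz; rw [h]; simp

lemma rr_sq {z : ℂ} (h1 : z ≠ 1) (h2 : z ≠ -1) : rr z ^ 2 = z ^ 2 - 1 := by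
  have e1 : z - 1 ≠ 0 := sub_ne_zero.mpr h1
  have e2 : z + 1 ≠ 0 := by
    intro h; apply h2; linear_combination h
  rw [rr, mul_pow, ← Complex.exp_nat_mul, ← Complex.exp_nat_mul]
  push_cast
  rw [show (2:ℂ) * ((1/2) * Complex.log (z-1)) = Complex.log (z-1) by ring,
    show (2:ℂ) * ((1/2) * Complex.log (z+1)) = Complex.log (z+1) by ring,
    ← Complex.exp_add, Complex.exp_add, Complex.exp_log e1, Complex.exp_log e2]
  ring

lemma rr_re_mul_im {z : ℂ} (hz : z.im ≠ 0) :
    (rr z).re * (rr z).im = z.re * z.im := by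
  have h := rr_sq (ne_one_of_im hz) (ne_neg_one_of_im hz)
  have h2 := congrArg Complex.im h
  simp only [sq, Complex.mul_im, Complex.sub_im, Complex.one_im] at h2
  linarith

lemma continuousAt_rr {z : ℂ} (hz : z.im ≠ 0) : ContinuousAt rr z := by
  have h1 : ContinuousAt Complex.log (z - 1) :=
    continuousAt_clog (Or.inr (by simpa using hz))
  have h2 : ContinuousAt Complex.log (z + 1) :=
    continuousAt_clog (Or.inr (by simpa using hz))
  have l1 : ContinuousAt (fun w : ℂ => Complex.log (w - 1)) z :=
    h1.tendsto.comp ((continuous_sub_right (1:ℂ)).continuousAt)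
  have l2 : ContinuousAt (fun w : ℂ => Complex.log (w + 1)) z :=
    h2.tendsto.comp ((continuous_add_right (1:ℂ)).continuousAt)
  have e1 : ContinuousAt (fun w : ℂ => Complex.exp ((1/2 : ℂ) * Complex.log (w - 1))) z :=
    Complex.continuous_exp.continuousAt.tendsto.comp (continuousAt_const.mul l1)
  have e2 : ContinuousAt (fun w : ℂ => Complex.exp ((1/2 : ℂ) * Complex.log (w + 1))) z :=
    Complex.continuous_exp.continuousAt.tendsto.comp (continuousAt_const.mul l2)
  exact e1.mul e2

lemma rr_z0_im_neg {y : ℝ} (hy : 0 < y) : (rr (-(y:ℂ) * Complex.I)).im < 0 := by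
  set z₀ : ℂ := -(y:ℂ) * Complex.I with hz₀
  have him1 : (z₀ - 1).im = -y := by simp [hz₀]
  have him2 : (z₀ + 1).im = -y := by simp [hz₀]
  have a1 : Complex.arg (z₀ - 1) < 0 := Complex.arg_neg_iff.mpr (by rw [him1]; linarith)
  have a2 : Complex.arg (z₀ + 1) < 0 := Complex.arg_neg_iff.mpr (by rw [him2]; linarith)
  have b1 : -Real.pi < Complex.arg (z₀ - 1) := Complex.neg_pi_lt_arg _
  have b2 : -Real.pi < Complex.arg (z₀ + 1) := Complex.neg_pi_lt_arg _
  have hr : rr z₀ = Complex.exp ((1/2 : ℂ) * Complex.log (z₀ - 1) +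
      (1/2 : ℂ) * Complex.log (z₀ + 1)) := by
    rw [rr, Complex.exp_add]
  have hsim : ((1/2 : ℂ) * Complex.log (z₀ - 1) + (1/2 : ℂ) * Complex.log (z₀ + 1)).im
      = (1/2) * Complex.arg (z₀ - 1) + (1/2) * Complex.arg (z₀ + 1) := by
    simp [Complex.add_im, Complex.mul_im, Complex.log_im]
  rw [hr, Complex.exp_im, hsim]
  have hsin : Real.sin ((1/2) * Complex.arg (z₀ - 1) + (1/2) * Complex.arg (z₀ + 1)) < 0 :=
    Real.sin_neg_of_neg_of_neg_pi_lt (by linarith) (by linarith)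
  have hepos : 0 < Real.exp (((1/2 : ℂ) * Complex.log (z₀ - 1) +
      (1/2 : ℂ) * Complex.log (z₀ + 1)).re) := Real.exp_pos _
  exact mul_neg_of_pos_of_neg hepos hsin

lemma rr_z0_re_zero {y : ℝ} (hy : 0 < y) : (rr (-(y:ℂ) * Complex.I)).re = 0 := by
  set z₀ : ℂ := -(y:ℂ) * Complex.I with hz₀
  have hz : z₀.im ≠ 0 := by simp [hz₀]; linarith
  have key := rr_re_mul_im hz
  have hre : z₀.re = 0 := by simp [hz₀]
  have him : (rr z₀).im < 0 := rr_z0_im_neg hy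
  rw [hre, zero_mul] at key
  rcases mul_eq_zero.mp key with h | h
  · exact h
  · exact absurd h him.ne

lemma tendsto_Pinf_aux (α μ : ℝ) (β : ℂ) {y : ℝ} (hy : 0 < y) {g : ℝ → ℂ} {L : ℂ}
    (hg : Tendsto g (𝓝[>] (0:ℝ)) (𝓝 (-(y:ℂ) * Complex.I)))
    (hlog : Tendsto (fun δ => Complex.log (-Complex.I * (g δ + rr (g δ)))) (𝓝[>] (0:ℝ)) (𝓝 L)) :
    Tendsto (fun δ => Pinf α μ β (g δ)) (𝓝[>] (0:ℝ))
      (𝓝 (dS (Complex.exp (β * (Real.log 2 : ℂ))) *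
        dS (Complex.exp (((Real.pi : ℂ) * Complex.I / 2) * ((μ:ℂ) - β))) *
        (((1:ℂ)/(Real.sqrt 2:ℂ)) • !![(1:ℂ), -Complex.I; -Complex.I, 1]) *
        dS (Complex.exp ((1/4 : ℂ) * (Complex.log ((-(y:ℂ)*Complex.I) - 1) -
            Complex.log ((-(y:ℂ)*Complex.I) + 1)))) *
        (((1:ℂ)/(Real.sqrt 2:ℂ)) • !![(1:ℂ), Complex.I; Complex.I, 1]) *
        dS (Complex.exp (-β * (L + Complex.I * (Real.pi:ℂ) / 2))) *
        dS (Complex.exp (((Real.pi:ℂ) * Complex.I / 2) * β)) *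
        dS (Complex.exp ((α:ℂ) *
            Complex.log ((-Complex.I + rr (-(y:ℂ)*Complex.I)) / (-(y:ℂ)*Complex.I)))) *
        dS (Complex.exp ((μ:ℂ) * Complex.log (DD (-(y:ℂ)*Complex.I)))))) := by
  set z₀ : ℂ := -(y:ℂ) * Complex.I with hz₀
  have hzim : z₀.im = -y := by simp [hz₀]
  have hz : z₀.im ≠ 0 := by rw [hzim]; exact neg_ne_zero.mpr hy.ne'
  have hz0 : z₀ ≠ 0 := by
    intro h; apply hz; rw [h]; simp
  set b : ℝ := (rr z₀).im with hbdef
  have hb : b < 0 := rr_z0_im_neg hy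
  have ha : (rr z₀).re = 0 := rr_z0_re_zero hy
  have hbI : rr z₀ = (b:ℂ) * Complex.I := by
    apply Complex.ext <;> simp [ha, hbdef]
  -- factor 4 : (1/4)(log(z-1) - log(z+1))
  have hc1 : Tendsto (fun δ => Complex.exp ((1/4 : ℂ) *
      (Complex.log (g δ - 1) - Complex.log (g δ + 1)))) (𝓝[>] (0:ℝ))
      (𝓝 (Complex.exp ((1/4 : ℂ) * (Complex.log (z₀ - 1) - Complex.log (z₀ + 1))))) := by
    have l1 : Tendsto (fun δ => Complex.log (g δ - 1)) (𝓝[>] (0:ℝ)) (𝓝 (Complex.log (z₀ - 1))) :=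
      (continuousAt_clog (Or.inr (by simpa using hz))).tendsto.comp
        ((hg.sub tendsto_const_nhds))
    have l2 : Tendsto (fun δ => Complex.log (g δ + 1)) (𝓝[>] (0:ℝ)) (𝓝 (Complex.log (z₀ + 1))) :=
      (continuousAt_clog (Or.inr (by simpa using hz))).tendsto.comp
        ((hg.add tendsto_const_nhds))
    exact Complex.continuous_exp.continuousAt.tendsto.comp
      (tendsto_const_nhds.mul (l1.sub l2))
  -- factor 6 : exp(-β Lneg(z+rr z))
  have hc2 : Tendsto (fun δ => Complex.exp (-β * Lneg (g δ + rr (g δ)))) (𝓝[>] (0:ℝ))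
      (𝓝 (Complex.exp (-β * (L + Complex.I * (Real.pi:ℂ) / 2)))) := by
    have : Tendsto (fun δ => -β * (Complex.log (-Complex.I * (g δ + rr (g δ))) +
        Complex.I * (Real.pi:ℂ) / 2)) (𝓝[>] (0:ℝ))
        (𝓝 (-β * (L + Complex.I * (Real.pi:ℂ) / 2))) :=
      tendsto_const_nhds.mul (hlog.add tendsto_const_nhds)
    simpa [Lneg, Function.comp_def] using Complex.continuous_exp.continuousAt.tendsto.comp this
  -- factor 8 : exp(α log((-I+rr z)/z))
  have hrrg : Tendsto (fun δ => rr (g δ)) (𝓝[>] (0:ℝ)) (𝓝 (rr z₀)) :=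
    (continuousAt_rr hz).tendsto.comp hg
  have hu : Tendsto (fun δ => (-Complex.I + rr (g δ)) / (g δ)) (𝓝[>] (0:ℝ))
      (𝓝 ((-Complex.I + rr z₀) / z₀)) :=
    (tendsto_const_nhds.add hrrg).div hg hz0
  have hu0 : (-Complex.I + rr z₀) / z₀ = (((1-b)/y : ℝ) : ℂ) := by
    rw [hbI, hz₀, div_eq_iff hz0]
    push_cast
    have : (y:ℂ) ≠ 0 := by exact_mod_cast hy.ne'
    field_simp
    ring
  have hslit : (-Complex.I + rr z₀) / z₀ ∈ Complex.slitPlane := by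
    rw [hu0]
    exact Or.inl (by simpa using div_pos (by linarith) hy)
  have hc3 : Tendsto (fun δ => Complex.exp ((α:ℂ) *
      Complex.log ((-Complex.I + rr (g δ)) / (g δ)))) (𝓝[>] (0:ℝ))
      (𝓝 (Complex.exp ((α:ℂ) * Complex.log ((-Complex.I + rr z₀) / z₀)))) :=
    Complex.continuous_exp.continuousAt.tendsto.comp
      (tendsto_const_nhds.mul ((continuousAt_clog hslit).tendsto.comp hu))
  -- factor 9 : exp(μ log(DD z))
  have hden : (1 : ℂ) + Complex.I * rr z₀ = (((1-b) : ℝ) : ℂ) := by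
    rw [hbI]; push_cast
    have : Complex.I * ((b:ℂ) * Complex.I) = -(b:ℂ) := by
      rw [show Complex.I * ((b:ℂ) * Complex.I) = (b:ℂ) * (Complex.I * Complex.I) by ring,
        Complex.I_mul_I]; ring
    rw [this]; ring
  have hdnz : (1 : ℂ) + Complex.I * rr z₀ ≠ 0 := by
    rw [hden]
    exact_mod_cast (by linarith : (1:ℝ) - b ≠ 0)
  have hDD : Tendsto (fun δ => DD (g δ)) (𝓝[>] (0:ℝ)) (𝓝 (DD z₀)) := by
    simp only [DD]
    exact hg.div (tendsto_const_nhds.add (tendsto_const_nhds.mul hrrg)) hdnz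
  have hDDval : DD z₀ = ((-y/(1-b) : ℝ) : ℂ) * Complex.I := by
    rw [DD, hden, hz₀]
    push_cast
    have h1b : ((1:ℂ) - (b:ℂ)) ≠ 0 := by
      exact_mod_cast (by intro h; exact (by linarith : (1:ℝ) - b ≠ 0) (by exact_mod_cast h))
    field_simp
  have hDDslit : DD z₀ ∈ Complex.slitPlane := by
    refine Or.inr ?_
    have him : (((-y/(1-b) : ℝ) : ℂ) * Complex.I).im = -y/(1-b) := by
      rw [Complex.mul_I_im, Complex.ofReal_re]
    rw [hDDval, him]
    exact div_ne_zero (neg_ne_zero.mpr hy.ne') (by linarith)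
  have hc4 : Tendsto (fun δ => Complex.exp ((μ:ℂ) * Complex.log (DD (g δ)))) (𝓝[>] (0:ℝ))
      (𝓝 (Complex.exp ((μ:ℂ) * Complex.log (DD z₀)))) :=
    Complex.continuous_exp.continuousAt.tendsto.comp
      (tendsto_const_nhds.mul ((continuousAt_clog hDDslit).tendsto.comp hDD))
  simp only [Pinf]
  exact ((((((tendsto_const_nhds.mul (tendsto_dS hc1 (Complex.exp_ne_zero _))).mul
    tendsto_const_nhds).mul (tendsto_dS hc2 (Complex.exp_ne_zero _))).mul
    tendsto_const_nhds).mul (tendsto_dS hc3 (Complex.exp_ne_zero _))).mul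
    (tendsto_dS hc4 (Complex.exp_ne_zero _)))

theorem stmt14 (α μ : ℝ) (β : ℂ) (hα : -(1 / 2) < α) (hβ : β.re = 0)
    (y : ℝ) (hy : 0 < y) :
    ∃ Pp Pm : Matrix (Fin 2) (Fin 2) ℂ,
      Tendsto (fun δ : ℝ => Pinf α μ β (-(y : ℂ) * Complex.I + (δ : ℂ)))
        (𝓝[>] 0) (𝓝 Pp) ∧
      Tendsto (fun δ : ℝ => Pinf α μ β (-(y : ℂ) * Complex.I - (δ : ℂ)))
        (𝓝[>] 0) (𝓝 Pm) ∧
      Pp = Pm * !![Complex.exp (2 * (Real.pi : ℂ) * Complex.I * β), 0;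
                   0, Complex.exp (-(2 * (Real.pi : ℂ) * Complex.I) * β)] := by
  have hz₀ : True := trivial
  set z₀ : ℂ := -(y:ℂ) * Complex.I with hz₀def
  have hzim : z₀.im = -y := by simp [hz₀def]
  have hz : z₀.im ≠ 0 := by rw [hzim]; exact neg_ne_zero.mpr hy.ne'
  set b : ℝ := (rr z₀).im with hbdef
  have hb : b < 0 := rr_z0_im_neg hy
  have ha : (rr z₀).re = 0 := rr_z0_re_zero hy
  set w₀ : ℂ := -Complex.I * (z₀ + rr z₀) with hw₀def
  have hw0re : w₀.re < 0 := by
    have : w₀.re = z₀.im + b := by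
      simp [hw₀def, Complex.mul_re, Complex.add_im, hbdef]
    rw [this, hzim]; linarith
  have hw0im : w₀.im = 0 := by
    have hre : z₀.re = 0 := by simp [hz₀def]
    simp [hw₀def, Complex.mul_im, Complex.add_re, hre, ha]
  -- the two approach paths
  have hrr_tendsto : ∀ g : ℝ → ℂ, Tendsto g (𝓝[>] (0:ℝ)) (𝓝 z₀) →
      Tendsto (fun δ => rr (g δ)) (𝓝[>] (0:ℝ)) (𝓝 (rr z₀)) :=
    fun g hg => (continuousAt_rr hz).tendsto.comp hg
  have hgp : Tendsto (fun δ : ℝ => -(y:ℂ) * Complex.I + (δ:ℂ)) (𝓝[>] (0:ℝ)) (𝓝 z₀) := by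
    have h0 : Tendsto (fun δ : ℝ => -(y:ℂ) * Complex.I + (δ:ℂ)) (𝓝 (0:ℝ))
        (𝓝 (-(y:ℂ) * Complex.I + ((0:ℝ):ℂ))) :=
      tendsto_const_nhds.add (Complex.continuous_ofReal.tendsto 0)
    rw [Complex.ofReal_zero, add_zero] at h0
    exact h0.mono_left nhdsWithin_le_nhds
  have hgm : Tendsto (fun δ : ℝ => -(y:ℂ) * Complex.I - (δ:ℂ)) (𝓝[>] (0:ℝ)) (𝓝 z₀) := by
    have h0 : Tendsto (fun δ : ℝ => -(y:ℂ) * Complex.I - (δ:ℂ)) (𝓝 (0:ℝ))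
        (𝓝 (-(y:ℂ) * Complex.I - ((0:ℝ):ℂ))) :=
      tendsto_const_nhds.sub (Complex.continuous_ofReal.tendsto 0)
    rw [Complex.ofReal_zero, sub_zero] at h0
    exact h0.mono_left nhdsWithin_le_nhds
  have hwp : Tendsto (fun δ : ℝ => -Complex.I * ((-(y:ℂ) * Complex.I + (δ:ℂ)) +
      rr (-(y:ℂ) * Complex.I + (δ:ℂ)))) (𝓝[>] (0:ℝ)) (𝓝 w₀) :=
    tendsto_const_nhds.mul (hgp.add (hrr_tendsto _ hgp))
  have hwm : Tendsto (fun δ : ℝ => -Complex.I * ((-(y:ℂ) * Complex.I - (δ:ℂ)) +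
      rr (-(y:ℂ) * Complex.I - (δ:ℂ)))) (𝓝[>] (0:ℝ)) (𝓝 w₀) :=
    tendsto_const_nhds.mul (hgm.add (hrr_tendsto _ hgm))
  -- eventual membership, plus side
  have hrrimp : Tendsto (fun δ : ℝ => (rr (-(y:ℂ) * Complex.I + (δ:ℂ))).im)
      (𝓝[>] (0:ℝ)) (𝓝 b) := (Complex.continuous_im.tendsto _).comp (hrr_tendsto _ hgp)
  have hrrimm : Tendsto (fun δ : ℝ => (rr (-(y:ℂ) * Complex.I - (δ:ℂ))).im)
      (𝓝[>] (0:ℝ)) (𝓝 b) := (Complex.continuous_im.tendsto _).comp (hrr_tendsto _ hgm)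
  have hmem_p : ∀ᶠ δ : ℝ in 𝓝[>] (0:ℝ),
      (-Complex.I * ((-(y:ℂ) * Complex.I + (δ:ℂ)) +
        rr (-(y:ℂ) * Complex.I + (δ:ℂ)))).im < 0 := by
    filter_upwards [self_mem_nhdsWithin, hrrimp.eventually_lt_const hb] with δ hδ him
    have hδ0 : (0:ℝ) < δ := hδ
    set z : ℂ := -(y:ℂ) * Complex.I + (δ:ℂ) with hzdef
    have hzre : z.re = δ := by simp [hzdef]
    have hzim' : z.im = -y := by simp [hzdef]
    have key : (rr z).re * (rr z).im = δ * (-y) := by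
      rw [rr_re_mul_im (by rw [hzim']; exact neg_ne_zero.mpr hy.ne'), hzre, hzim']
    have hrepos : 0 < (rr z).re := by nlinarith
    have : (-Complex.I * (z + rr z)).im = -(z.re + (rr z).re) := by
      simp [Complex.mul_im, Complex.add_re]
    rw [this, hzre]
    linarith
  have hmem_m : ∀ᶠ δ : ℝ in 𝓝[>] (0:ℝ),
      (0:ℝ) ≤ (-Complex.I * ((-(y:ℂ) * Complex.I - (δ:ℂ)) +
        rr (-(y:ℂ) * Complex.I - (δ:ℂ)))).im := by
    filter_upwards [self_mem_nhdsWithin, hrrimm.eventually_lt_const hb] with δ hδ him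
    have hδ0 : (0:ℝ) < δ := hδ
    set z : ℂ := -(y:ℂ) * Complex.I - (δ:ℂ) with hzdef
    have hzre : z.re = -δ := by simp [hzdef]
    have hzim' : z.im = -y := by simp [hzdef]
    have key : (rr z).re * (rr z).im = (-δ) * (-y) := by
      rw [rr_re_mul_im (by rw [hzim']; exact neg_ne_zero.mpr hy.ne'), hzre, hzim']
    have hreneg : (rr z).re < 0 := by nlinarith
    have : (-Complex.I * (z + rr z)).im = -(z.re + (rr z).re) := by
      simp [Complex.mul_im, Complex.add_re]
    rw [this, hzre]
    linarith
  have hlogp : Tendsto (fun δ : ℝ => Complex.log (-Complex.I *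
      ((-(y:ℂ) * Complex.I + (δ:ℂ)) + rr (-(y:ℂ) * Complex.I + (δ:ℂ)))))
      (𝓝[>] (0:ℝ)) (𝓝 ((Real.log ‖w₀‖ : ℂ) - (Real.pi : ℂ) * Complex.I)) :=
    (Complex.tendsto_log_nhdsWithin_im_neg_of_re_neg_of_im_zero hw0re hw0im).comp
      (tendsto_nhdsWithin_iff.mpr ⟨hwp, hmem_p⟩)
  have hlogm : Tendsto (fun δ : ℝ => Complex.log (-Complex.I *
      ((-(y:ℂ) * Complex.I - (δ:ℂ)) + rr (-(y:ℂ) * Complex.I - (δ:ℂ)))))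
      (𝓝[>] (0:ℝ)) (𝓝 ((Real.log ‖w₀‖ : ℂ) + (Real.pi : ℂ) * Complex.I)) :=
    (Complex.tendsto_log_nhdsWithin_im_nonneg_of_re_neg_of_im_zero hw0re hw0im).comp
      (tendsto_nhdsWithin_iff.mpr ⟨hwm, hmem_m⟩)
  refine ⟨_, _, tendsto_Pinf_aux α μ β hy hgp hlogp, tendsto_Pinf_aux α μ β hy hgm hlogm, ?_⟩
  have hJ : !![Complex.exp (2 * (Real.pi : ℂ) * Complex.I * β), 0;
      0, Complex.exp (-(2 * (Real.pi : ℂ) * Complex.I) * β)]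
      = dS (Complex.exp (2 * (Real.pi : ℂ) * Complex.I * β)) := by
    rw [dS]
    congr 1
    rw [← Complex.exp_neg]
    ring_nf
  rw [hJ]
  simp only [mul_assoc, dS_mul]
  congr 4
  congr 1
  simp only [← Complex.exp_add]
  congr 1
  ring
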